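/- A linear map d : V → V is a derivation of the Leibniz algebra L₁₇ if and only if there exist complex numbers a, b, p, q, r, s such that d(e₁) = a·e₁ + p·e₃ + q·e₄, d(e₂) = b·e₂ + r·e₃ + s·e₄, d(e₃) = (a+b)·e₃, and d(e₄) = (a+b)·e₄. Consequently, the space of derivations of L₁₇ is a 6-dimensional linear subspace of End(V). -/

import Mathlib

/-!
Since the bracket is bilinear, the Leibniz rule only has to be checked on pairs of basis vectors.
The products `⟦e₁,e₁⟧ = ⟦e₂,e₂⟧ = 0` kill the `e₂`-coordinate of `d e₁` and the `e₁`-coordinate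
of `d e₂`, the products `⟦e₁,e₂⟧ = e₃` and `⟦e₂,e₁⟧ = e₄` then determine `d e₃` and `d e₄`, and
every other basis condition holds automatically. The derivations are therefore the image of an
injective linear map `ℂ⁶ → End V`.
-/

/-- `V = ℂ⁴`. -/
abbrev V : Type := Fin 4 → ℂ

/-- standard basis: `e 0 = e₁`, ..., `e 3 = e₄`. -/
def e (i : Fin 4) : V := Pi.single i 1

/-- Bracket of the Leibniz algebra `L₁₇`:
`⟦e₁,e₂⟧ = e₃`, `⟦e₂,e₁⟧ = e₄`, all other basis products zero. -/
def br (x y : V) : V :=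
  (x 0 * y 1) • e 2 + (x 1 * y 0) • e 3

/-- A derivation. -/
def IsDer (d : V →ₗ[ℂ] V) : Prop :=
  ∀ x y : V, d (br x y) = br (d x) y + br x (d y)

namespace LinearMap

variable {R M ι : Type*} [CommSemiring R] [AddCommMonoid M] [Module R M]

def derivations (B : M →ₗ[R] M →ₗ[R] M) : Submodule R (Module.End R M) where
  carrier := {d | ∀ x y, d (B x y) = B (d x) y + B x (d y)}
  zero_mem' := by simp
  add_mem' {d d'} hd hd' x y := by
    simp only [add_apply, map_add, hd x y, hd' x y]
    abel
  smul_mem' c d hd x y := by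
    simp only [smul_apply, map_smul, hd x y, smul_add]

theorem mem_derivations_iff (B : M →ₗ[R] M →ₗ[R] M) (d : Module.End R M) :
    d ∈ derivations B ↔ B.compr₂ d = B.comp d + B.compl₂ d := by
  rw [ext_iff₂]; rfl

theorem mem_derivations_iff_basis (B : M →ₗ[R] M →ₗ[R] M) (b : Module.Basis ι R M)
    (d : Module.End R M) :
    d ∈ derivations B ↔ ∀ i j, d (B (b i) (b j)) = B (d (b i)) (b j) + B (b i) (d (b j)) := by
  rw [mem_derivations_iff]
  exact ⟨fun h i j => congr($h (b i) (b j)), fun h => ext_basis b b fun i j => by simp [h i j]⟩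

end LinearMap

def brBilin : V →ₗ[ℂ] V →ₗ[ℂ] V :=
  LinearMap.mk₂ ℂ br
    (fun _ _ _ => by simp only [br, Pi.add_apply]; module)
    (fun _ _ _ => by simp only [br, Pi.smul_apply, smul_eq_mul]; module)
    (fun _ _ _ => by simp only [br, Pi.add_apply]; module)
    (fun _ _ _ => by simp only [br, Pi.smul_apply, smul_eq_mul]; module)

theorem isDer_iff_mem_derivations (d : V →ₗ[ℂ] V) : IsDer d ↔ d ∈ brBilin.derivations := Iff.rfl

@[simp] theorem e_apply (i j : Fin 4) : e i j = if j = i then 1 else 0 := by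
  simp [e, Pi.single_apply]

theorem coe_basisFun_eq_e : ⇑(Pi.basisFun ℂ (Fin 4)) = e :=
  funext fun i => Pi.basisFun_apply ℂ (Fin 4) i

theorem ext_e {f g : V →ₗ[ℂ] V} (h0 : f (e 0) = g (e 0)) (h1 : f (e 1) = g (e 1))
    (h2 : f (e 2) = g (e 2)) (h3 : f (e 3) = g (e 3)) : f = g :=
  (Pi.basisFun ℂ (Fin 4)).ext fun i => by
    rw [coe_basisFun_eq_e]; fin_cases i <;> assumption

theorem isDer_iff (d : V →ₗ[ℂ] V) : IsDer d ↔ ∃ a b p q r s : ℂ,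
      d (e 0) = a • e 0 + p • e 2 + q • e 3 ∧
      d (e 1) = b • e 1 + r • e 2 + s • e 3 ∧
      d (e 2) = (a + b) • e 2 ∧
      d (e 3) = (a + b) • e 3 := by
  rw [isDer_iff_mem_derivations,
    LinearMap.mem_derivations_iff_basis _ (Pi.basisFun ℂ (Fin 4)), coe_basisFun_eq_e]
  constructor
  · intro h
    have hd01 : d (e 0) 1 = 0 := by simpa [brBilin, br] using (congrFun (h 0 0) 2).symm
    have hd10 : d (e 1) 0 = 0 := by simpa [brBilin, br] using (congrFun (h 1 1) 3).symm
    refine ⟨d (e 0) 0, d (e 1) 1, d (e 0) 2, d (e 0) 3, d (e 1) 2, d (e 1) 3, ?_, ?_, ?_, ?_⟩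
    · funext k; fin_cases k <;> simp [hd01]
    · funext k; fin_cases k <;> simp [hd10]
    · simpa [brBilin, br, add_smul] using h 0 1
    · simpa [brBilin, br, add_smul, add_comm] using h 1 0
  · rintro ⟨a, b, p, q, r, s, h0, h1, h2, h3⟩ i j
    fin_cases i <;> fin_cases j <;> simp [brBilin, br, h0, h1, h2, h3, add_smul, add_comm]

/-- The coefficients are `c = (a, b, p, q, r, s)`, in the notation of `derivations_of_L17`. -/
def derivationOfCoeffs : (Fin 6 → ℂ) →ₗ[ℂ] V →ₗ[ℂ] V :=
  LinearMap.mk₂ ℂ (fun c x => (c 0 * x 0) • e 0 + (c 1 * x 1) • e 1 +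
      (c 2 * x 0 + c 4 * x 1 + (c 0 + c 1) * x 2) • e 2 +
      (c 3 * x 0 + c 5 * x 1 + (c 0 + c 1) * x 3) • e 3)
    (fun _ _ _ => by simp only [Pi.add_apply]; module)
    (fun _ _ _ => by simp only [Pi.smul_apply, smul_eq_mul]; module)
    (fun _ _ _ => by simp only [Pi.add_apply]; module)
    (fun _ _ _ => by simp only [Pi.smul_apply, smul_eq_mul]; module)

section derivationOfCoeffs

variable (c : Fin 6 → ℂ)

theorem derivationOfCoeffs_apply_e_zero :
    derivationOfCoeffs c (e 0) = c 0 • e 0 + c 2 • e 2 + c 3 • e 3 := by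
  simp [derivationOfCoeffs]

theorem derivationOfCoeffs_apply_e_one :
    derivationOfCoeffs c (e 1) = c 1 • e 1 + c 4 • e 2 + c 5 • e 3 := by
  simp [derivationOfCoeffs]

theorem derivationOfCoeffs_apply_e_two :
    derivationOfCoeffs c (e 2) = (c 0 + c 1) • e 2 := by
  simp [derivationOfCoeffs]

theorem derivationOfCoeffs_apply_e_three :
    derivationOfCoeffs c (e 3) = (c 0 + c 1) • e 3 := by
  simp [derivationOfCoeffs]

end derivationOfCoeffs

theorem derivationOfCoeffs_injective : Function.Injective derivationOfCoeffs :=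
  Function.LeftInverse.injective
    (g := fun d => ![d (e 0) 0, d (e 1) 1, d (e 0) 2, d (e 0) 3, d (e 1) 2, d (e 1) 3])
    fun c => by funext k; fin_cases k <;> simp [derivationOfCoeffs]

theorem range_derivationOfCoeffs : LinearMap.range derivationOfCoeffs = brBilin.derivations := by
  ext d
  rw [LinearMap.mem_range, ← isDer_iff_mem_derivations, isDer_iff]
  constructor
  · rintro ⟨c, rfl⟩
    exact ⟨c 0, c 1, c 2, c 3, c 4, c 5, derivationOfCoeffs_apply_e_zero c,
      derivationOfCoeffs_apply_e_one c, derivationOfCoeffs_apply_e_two c,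
      derivationOfCoeffs_apply_e_three c⟩
  · rintro ⟨a, b, p, q, r, s, h0, h1, h2, h3⟩
    refine ⟨![a, b, p, q, r, s], ext_e ?_ ?_ ?_ ?_⟩
    · rw [h0, derivationOfCoeffs_apply_e_zero]; rfl
    · rw [h1, derivationOfCoeffs_apply_e_one]; rfl
    · rw [h2, derivationOfCoeffs_apply_e_two]; rfl
    · rw [h3, derivationOfCoeffs_apply_e_three]; rfl

theorem derivations_of_L17 :
    (∀ d : V →ₗ[ℂ] V, IsDer d ↔ ∃ a b p q r s : ℂ,
      d (e 0) = a • e 0 + p • e 2 + q • e 3 ∧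
      d (e 1) = b • e 1 + r • e 2 + s • e 3 ∧
      d (e 2) = (a + b) • e 2 ∧
      d (e 3) = (a + b) • e 3) ∧
    ∃ S : Submodule ℂ (V →ₗ[ℂ] V),
      (S : Set (V →ₗ[ℂ] V)) = {d | IsDer d} ∧ Module.finrank ℂ S = 6 := by
  refine ⟨isDer_iff, brBilin.derivations, rfl, ?_⟩
  rw [← range_derivationOfCoeffs, LinearMap.finrank_range_of_inj derivationOfCoeffs_injective,
    Module.finrank_fin_fun]
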